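/- arXiv:1505.04304 — 2 statements merged into one kernel-verified Lean document; each statement's English description precedes it below -/
import Mathlib

section
/- A normal ideal A of the pseudo MV-algebra M = Γ(G,u) is a summand-ideal of M if and only if M = A ⊕ A^⊥. -/
variable {G : Type*} [Lattice G] [AddGroup G]
  [CovariantClass G G (· + ·) (· ≤ ·)]
  [CovariantClass G G (Function.swap (· + ·)) (· ≤ ·)]

/-- `u` is a strong unit of the lattice-ordered group `G`. -/
def IsStrongUnit (u : G) : Prop := 0 ≤ u ∧ ∀ x : G, ∃ n : ℕ, x ≤ n • u

/-- The operation `x ⊕ y := (x + y) ⊓ u` of the pseudo MV-algebra `Γ(G,u)`. -/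
def oplus (u x y : G) : G := (x + y) ⊓ u

/-- The operation `x ⊙ y := (x - u + y) ⊔ 0` of the pseudo MV-algebra `Γ(G,u)`. -/
def odot (u x y : G) : G := (x - u + y) ⊔ 0

/-- `n.x := x ⊕ ⋯ ⊕ x` (`n` summands), with `0.x = 0`. -/
def nOplus (u : G) : ℕ → G → G
  | 0, _ => 0
  | n + 1, x => oplus u (nOplus u n x) x

/-- `I` is an ideal of the pseudo MV-algebra with carrier `C ⊆ Γ(G,u)`:
a nonempty subset of `C`, downward closed within `C`, and closed under `⊕`. -/
def IsIdealIn (u : G) (C I : Set G) : Prop :=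
  I ⊆ C ∧ I.Nonempty ∧ (∀ x ∈ I, ∀ y ∈ C, y ≤ x → y ∈ I) ∧
    ∀ x ∈ I, ∀ y ∈ I, oplus u x y ∈ I

/-- `I` is a normal ideal: `x ⊕ I = I ⊕ x` for all `x ∈ C`. -/
def IsNormalIdealIn (u : G) (C I : Set G) : Prop :=
  IsIdealIn u C I ∧ ∀ x ∈ C, (fun i => oplus u x i) '' I = (fun i => oplus u i x) '' I

/-- `⟨X⟩_n`, the smallest normal ideal (of the carrier `C`) containing `X`. -/
def normalGenIn (u : G) (C X : Set G) : Set G :=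
  ⋂₀ {I | IsNormalIdealIn u C I ∧ X ⊆ I}

/-- The polar `X^⊥ = {y ∈ C : y ∧ x = 0 for all x ∈ X}` computed in carrier `C`. -/
def polarIn (C X : Set G) : Set G := {y ∈ C | ∀ x ∈ X, y ⊓ x = 0}

/-- `A ⊕ B := {a ⊕ b : a ∈ A, b ∈ B}`. -/
def setOplus (u : G) (A B : Set G) : Set G := Set.image2 (oplus u) A B

/-- `↓a` computed within the carrier `C`. -/
def dsetIn (C : Set G) (a : G) : Set G := {x ∈ C | x ≤ a}

/-- `I` is a summand-ideal of the carrier `C`: a normal ideal such that for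
some normal ideal `J`, `I ∩ J = {0}` and `⟨I ∪ J⟩_n = C`. -/
def IsSummandIdealIn (u : G) (C I : Set G) : Prop :=
  IsNormalIdealIn u C I ∧ ∃ J, IsNormalIdealIn u C J ∧ I ∩ J = {0} ∧
    normalGenIn u C (I ∪ J) = C

/-- `I` is a polar ideal of the carrier `C`: `I = I^⊥⊥`. -/
def IsPolarIdealIn (C I : Set G) : Prop := polarIn C (polarIn C I) = I

/-- `a` is a Boolean element of the carrier `C`: `a ∈ C` and `a ⊕ a = a`. -/
def IsBooleanIn (u : G) (C : Set G) (a : G) : Prop := a ∈ C ∧ oplus u a a = a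

/-- The carrier `C` is strongly projectable: every polar ideal is a summand-ideal. -/
def IsStronglyProjectableIn (u : G) (C : Set G) : Prop :=
  ∀ I : Set G, IsPolarIdealIn C I → IsSummandIdealIn u C I

/-- `N` is a subalgebra of `Γ(G,u)`: contains `0` and `u`, closed under `⊕`,
`x⁻ = u - x` and `x∼ = -x + u`. -/
def IsSubalg (u : G) (N : Set G) : Prop :=
  N ⊆ Set.Icc 0 u ∧ 0 ∈ N ∧ u ∈ N ∧
    (∀ x ∈ N, ∀ y ∈ N, oplus u x y ∈ N) ∧
    (∀ x ∈ N, u - x ∈ N) ∧ (∀ x ∈ N, -x + u ∈ N)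

/-- `N` is a large subalgebra of `Γ(G,u)`: for every nonzero `y ∈ Γ(G,u)` there
are `n ∈ ℕ` and a nonzero `x ∈ N` with `x ≤ n.y`. -/
def IsLargeSubalg (u : G) (N : Set G) : Prop :=
  IsSubalg u N ∧ ∀ y ∈ Set.Icc (0 : G) u, y ≠ 0 →
    ∃ n : ℕ, ∃ x ∈ N, x ≠ 0 ∧ x ≤ nOplus u n y


/-! If `M = A ⊞ J`, then `A ∩ J = {0}` makes `A` and `J` disjoint, so `J ⊆ A^⊥` and every
element of `A` commutes with every element of `J`. Commutation makes `A ⊕ J` closed under `⊕`,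
so it is a normal ideal; it contains `A ∪ J`, hence is all of `M`, and `M = A ⊕ J ⊆ A ⊕ A^⊥`.

Conversely, if `M = A ⊕ A^⊥`, write `u = a₀ ⊕ b₀` with `a₀ ∈ A` and `b₀ ∈ A^⊥`. Disjointness
gives `a₀ + b₀ = u` and `A^⊥ = ↓b₀`. Now `x ⊕ ↓b₀` and `↓b₀ ⊕ x` are the intervals
`[x, (x + b₀) ∧ u]` and `[x, (b₀ + x) ∧ u]`, and the two upper ends agree because
`(x + b₀) ∧ (a₀ + b₀) = (x ∧ a₀) + b₀ = b₀ + (x ∧ a₀)`. So `A^⊥` is normal and `M = A ⊞ A^⊥`. -/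

set_option linter.unusedSectionVars false

section LatticeOrderedGroup

variable {a b c x : G}

theorem add_eq_sup_of_inf_eq_zero (h : a ⊓ b = 0) : a + b = a ⊔ b := by
  calc a + b = a + -(a ⊓ b) + b := by rw [h, neg_zero, add_zero]
    _ = a ⊔ b := by
      rw [neg_inf, add_sup, add_neg_cancel, sup_add, zero_add, neg_add_cancel_right, sup_comm]

theorem add_comm_of_inf_eq_zero (h : a ⊓ b = 0) : a + b = b + a := by
  rw [add_eq_sup_of_inf_eq_zero h, add_eq_sup_of_inf_eq_zero (inf_comm a b ▸ h), sup_comm]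

theorem inf_add_le_inf_add_inf (ha : 0 ≤ a) (hb : 0 ≤ b) (hc : 0 ≤ c) :
    a ⊓ (b + c) ≤ a ⊓ b + a ⊓ c := by
  have h₁ : a ⊓ (b + c) ≤ a ⊓ b + a := inf_le_left.trans (le_add_of_nonneg_left (le_inf ha hb))
  have h₂ : a ⊓ (b + c) ≤ a ⊓ b + c := by
    rw [inf_add]
    exact le_inf (inf_le_left.trans (le_add_of_nonneg_right hc)) inf_le_right
  calc a ⊓ (b + c) ≤ (a ⊓ b + a) ⊓ (a ⊓ b + c) := le_inf h₁ h₂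
    _ = a ⊓ b + a ⊓ c := (add_inf a c (a ⊓ b)).symm

theorem add_inf_add_eq_add_inf_add (hab : a ⊓ b = 0) (hx : 0 ≤ x) :
    (x + b) ⊓ (a + b) = (b + x) ⊓ (b + a) := by
  have ha : 0 ≤ a := hab ▸ inf_le_left
  have hb : 0 ≤ b := hab ▸ inf_le_right
  have hxab : x ⊓ a ⊓ b = 0 :=
    le_antisymm (hab ▸ inf_le_inf_right b inf_le_right) (le_inf (le_inf hx ha) hb)
  rw [← inf_add, ← add_inf, add_comm_of_inf_eq_zero hxab]

end LatticeOrderedGroup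

section Gamma

variable {u x y z a b c d : G}

theorem oplus_mem_Icc (hu : 0 ≤ u) (hx : 0 ≤ x) (hy : 0 ≤ y) : oplus u x y ∈ Set.Icc 0 u :=
  ⟨le_inf (add_nonneg hx hy) hu, inf_le_right⟩

theorem oplus_zero (hx : x ≤ u) : oplus u x 0 = x := by
  rw [oplus, add_zero, inf_eq_left.mpr hx]

theorem zero_oplus (hx : x ≤ u) : oplus u 0 x = x := by
  rw [oplus, zero_add, inf_eq_left.mpr hx]

theorem oplus_assoc_of_nonneg (hx : 0 ≤ x) (hz : 0 ≤ z) :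
    oplus u (oplus u x y) z = oplus u x (oplus u y z) := by
  rw [oplus, oplus, oplus, oplus, inf_add, inf_assoc,
    inf_eq_right.mpr (le_add_of_nonneg_right hz), add_inf, inf_assoc,
    inf_eq_right.mpr (le_add_of_nonneg_left hx), add_assoc]

theorem oplus_inf_inf (hu : 0 ≤ u) (hx : 0 ≤ x) (hy : 0 ≤ y) :
    oplus u (x ⊓ u) (y ⊓ u) = (x + y) ⊓ u := by
  rw [oplus, add_inf, inf_assoc, inf_eq_right.mpr (le_add_of_nonneg_left (le_inf hx hu)),
    inf_add, inf_assoc, inf_eq_right.mpr (le_add_of_nonneg_right hy)]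

theorem oplus_oplus_oplus_comm_of_inf_eq_zero (hu : 0 ≤ u) (ha : 0 ≤ a) (hb : 0 ≤ b)
    (hc : 0 ≤ c) (hd : 0 ≤ d) (hbc : b ⊓ c = 0) :
    oplus u (oplus u a b) (oplus u c d) = oplus u (oplus u a c) (oplus u b d) := by
  show oplus u ((a + b) ⊓ u) ((c + d) ⊓ u) = oplus u ((a + c) ⊓ u) ((b + d) ⊓ u)
  rw [oplus_inf_inf hu (add_nonneg ha hb) (add_nonneg hc hd),
    oplus_inf_inf hu (add_nonneg ha hc) (add_nonneg hb hd), add_assoc a, add_assoc a,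
    ← add_assoc b, ← add_assoc c, add_comm_of_inf_eq_zero hbc]

theorem image_oplus_left_dsetIn (hx : x ∈ Set.Icc 0 u) :
    (fun i => oplus u x i) '' dsetIn (Set.Icc 0 u) b = Set.Icc x ((x + b) ⊓ u) := by
  ext t
  simp only [dsetIn, Set.mem_image, Set.mem_ofPred_eq, Set.mem_Icc, oplus]
  constructor
  · rintro ⟨j, ⟨⟨hj₀, -⟩, hjb⟩, rfl⟩
    exact ⟨le_inf (le_add_of_nonneg_right hj₀) hx.2, inf_le_inf_right _ (add_le_add_right hjb x)⟩
  · rintro ⟨hxt, ht⟩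
    have htu : t ≤ u := ht.trans inf_le_right
    refine ⟨-x + t, ⟨⟨le_neg_add_iff_le.mpr hxt, ?_⟩, ?_⟩, ?_⟩
    · exact neg_add_le_iff_le_add.mpr (htu.trans (le_add_of_nonneg_left hx.1))
    · exact neg_add_le_iff_le_add.mpr (ht.trans inf_le_left)
    · rw [add_neg_cancel_left, inf_eq_left.mpr htu]

theorem image_oplus_right_dsetIn (hx : x ∈ Set.Icc 0 u) :
    (fun i => oplus u i x) '' dsetIn (Set.Icc 0 u) b = Set.Icc x ((b + x) ⊓ u) := by
  ext t
  simp only [dsetIn, Set.mem_image, Set.mem_ofPred_eq, Set.mem_Icc, oplus]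
  constructor
  · rintro ⟨j, ⟨⟨hj₀, -⟩, hjb⟩, rfl⟩
    exact ⟨le_inf (le_add_of_nonneg_left hj₀) hx.2, inf_le_inf_right _ (add_le_add_left hjb x)⟩
  · rintro ⟨hxt, ht⟩
    have htu : t ≤ u := ht.trans inf_le_right
    refine ⟨t - x, ⟨⟨sub_nonneg.mpr hxt, ?_⟩, ?_⟩, ?_⟩
    · exact (sub_le_sub_right htu x).trans (sub_le_self u hx.1)
    · exact sub_le_iff_le_add.mpr (ht.trans inf_le_left)
    · rw [sub_add_cancel, inf_eq_left.mpr htu]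

theorem exists_oplus_eq_of_le_oplus (hx : x ∈ Set.Icc 0 u) (ha : 0 ≤ a) (hb : 0 ≤ b)
    (hle : x ≤ oplus u a b) :
    ∃ a' ∈ Set.Icc 0 u, ∃ b' ∈ Set.Icc 0 u, a' ≤ a ∧ b' ≤ b ∧ oplus u a' b' = x := by
  have hx_le : x ≤ x ⊓ a + x ⊓ b :=
    calc x = x ⊓ (a + b) := (inf_eq_left.mpr (hle.trans inf_le_left)).symm
      _ ≤ x ⊓ a + x ⊓ b := inf_add_le_inf_add_inf hx.1 ha hb
  have hrest : (-(x ⊓ a) + x) ⊔ 0 ≤ x ⊓ b :=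
    sup_le (neg_add_le_iff_le_add.mpr hx_le) (le_inf hx.1 hb)
  refine ⟨x ⊓ a, ⟨le_inf hx.1 ha, inf_le_left.trans hx.2⟩, (-(x ⊓ a) + x) ⊔ 0,
    ⟨le_sup_right, hrest.trans (inf_le_left.trans hx.2)⟩, inf_le_right,
    hrest.trans inf_le_right, ?_⟩
  rw [oplus, add_sup, add_neg_cancel_left, add_zero, sup_eq_left.mpr inf_le_left,
    inf_eq_left.mpr hx.2]

theorem setOplus_subset_Icc (hu : 0 ≤ u) {A B : Set G} (hA : A ⊆ Set.Icc 0 u)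
    (hB : B ⊆ Set.Icc 0 u) : setOplus u A B ⊆ Set.Icc 0 u := by
  rintro _ ⟨a, ha, b, hb, rfl⟩
  exact oplus_mem_Icc hu (hA ha).1 (hB hb).1

end Gamma

section Ideals

variable {u : G} {C I J A X : Set G}

theorem IsIdealIn.zero_mem (hI : IsIdealIn u (Set.Icc 0 u) I) : 0 ∈ I := by
  obtain ⟨x, hx⟩ := hI.2.1
  have hxC := hI.1 hx
  exact hI.2.2.1 x hx 0 ⟨le_rfl, hxC.1.trans hxC.2⟩ hxC.1

theorem IsIdealIn.inf_eq_zero_of_inter_eq (hI : IsIdealIn u (Set.Icc 0 u) I)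
    (hJ : IsIdealIn u (Set.Icc 0 u) J) (hIJ : I ∩ J = {0}) {a b : G} (ha : a ∈ I)
    (hb : b ∈ J) : a ⊓ b = 0 := by
  have haC := hI.1 ha
  have hab : a ⊓ b ∈ Set.Icc 0 u := ⟨le_inf haC.1 (hJ.1 hb).1, inf_le_left.trans haC.2⟩
  have hmem : a ⊓ b ∈ I ∩ J :=
    ⟨hI.2.2.1 a ha _ hab inf_le_left, hJ.2.2.1 b hb _ hab inf_le_right⟩
  rwa [hIJ] at hmem

theorem IsNormalIdealIn.exists_oplus_left_eq (hI : IsNormalIdealIn u C I) {x i : G}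
    (hx : x ∈ C) (hi : i ∈ I) : ∃ i' ∈ I, oplus u i' x = oplus u x i := by
  rw [← Set.mem_image, ← hI.2 x hx]
  exact Set.mem_image_of_mem _ hi

theorem IsNormalIdealIn.exists_oplus_right_eq (hI : IsNormalIdealIn u C I) {x i : G}
    (hx : x ∈ C) (hi : i ∈ I) : ∃ i' ∈ I, oplus u x i' = oplus u i x := by
  rw [← Set.mem_image, hI.2 x hx]
  exact Set.mem_image_of_mem _ hi

theorem normalGenIn_subset (hI : IsNormalIdealIn u C I) (hX : X ⊆ I) : normalGenIn u C X ⊆ I :=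
  Set.sInter_subset_of_mem ⟨hI, hX⟩

theorem setOplus_subset_normalGenIn : setOplus u A J ⊆ normalGenIn u C (A ∪ J) := by
  rintro _ ⟨a, ha, j, hj, rfl⟩
  exact Set.mem_sInter.mpr fun I ⟨hI, hAJ⟩ =>
    hI.1.2.2.2 a (hAJ (Or.inl ha)) j (hAJ (Or.inr hj))

theorem isIdealIn_polarIn (hu : 0 ≤ u) (hA : A ⊆ Set.Icc 0 u) :
    IsIdealIn u (Set.Icc 0 u) (polarIn (Set.Icc 0 u) A) := by
  refine ⟨fun y hy => hy.1, ⟨0, ⟨le_rfl, hu⟩, fun a ha => inf_eq_left.mpr (hA ha).1⟩, ?_, ?_⟩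
  · intro x hx y hyC hyx
    exact ⟨hyC, fun a ha => le_antisymm ((inf_le_inf_right a hyx).trans (hx.2 a ha).le)
      (le_inf hyC.1 (hA ha).1)⟩
  · intro x hx y hy
    have hxy := oplus_mem_Icc hu hx.1.1 hy.1.1
    refine ⟨hxy, fun a ha => le_antisymm ?_ (le_inf hxy.1 (hA ha).1)⟩
    calc oplus u x y ⊓ a ≤ a ⊓ (x + y) := inf_comm (x + y) a ▸ inf_le_inf_right a inf_le_left
      _ ≤ a ⊓ x + a ⊓ y := inf_add_le_inf_add_inf (hA ha).1 hx.1.1 hy.1.1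
      _ = 0 := by rw [inf_comm a x, inf_comm a y, hx.2 a ha, hy.2 a ha, add_zero]

theorem inter_polarIn_eq_zero (hu : 0 ≤ u) (hA : IsIdealIn u (Set.Icc 0 u) A) :
    A ∩ polarIn (Set.Icc 0 u) A = {0} := by
  refine Set.Subset.antisymm (fun x ⟨hxA, hxP⟩ => ?_) ?_
  · simpa only [inf_idem, Set.mem_singleton_iff] using hxP.2 x hxA
  · rw [Set.singleton_subset_iff]
    exact ⟨hA.zero_mem, (isIdealIn_polarIn hu hA.1).zero_mem⟩

theorem isNormalIdealIn_of_eq_dsetIn {b : G} (hI : IsIdealIn u (Set.Icc 0 u) I)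
    (hIb : I = dsetIn (Set.Icc 0 u) b)
    (hb : ∀ x ∈ Set.Icc 0 u, (x + b) ⊓ u = (b + x) ⊓ u) :
    IsNormalIdealIn u (Set.Icc 0 u) I := by
  refine ⟨hI, fun x hx => ?_⟩
  rw [hIb, image_oplus_left_dsetIn hx, image_oplus_right_dsetIn hx, hb x hx]

theorem isNormalIdealIn_Icc (hu : 0 ≤ u) : IsNormalIdealIn u (Set.Icc 0 u) (Set.Icc 0 u) := by
  refine isNormalIdealIn_of_eq_dsetIn (b := u) ⟨subset_rfl, ⟨0, le_rfl, hu⟩, fun _ _ _ hy _ => hy,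
    fun _ hx _ hy => oplus_mem_Icc hu hx.1 hy.1⟩ ?_ fun x hx => ?_
  · ext y
    exact ⟨fun hy => ⟨hy, hy.2⟩, And.left⟩
  · rw [inf_eq_right.mpr (le_add_of_nonneg_left hx.1),
      inf_eq_right.mpr (le_add_of_nonneg_right hx.1)]

theorem normalGenIn_eq_Icc_of_setOplus_eq (hu : 0 ≤ u) (hAJ : A ∪ J ⊆ Set.Icc 0 u)
    (h : setOplus u A J = Set.Icc 0 u) : normalGenIn u (Set.Icc 0 u) (A ∪ J) = Set.Icc 0 u :=
  (normalGenIn_subset (isNormalIdealIn_Icc hu) hAJ).antisymm (h ▸ setOplus_subset_normalGenIn)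

theorem isNormalIdealIn_setOplus (hu : 0 ≤ u) (hA : IsNormalIdealIn u (Set.Icc 0 u) A)
    (hJ : IsNormalIdealIn u (Set.Icc 0 u) J) (hAJ : ∀ a ∈ A, ∀ j ∈ J, a ⊓ j = 0) :
    IsNormalIdealIn u (Set.Icc 0 u) (setOplus u A J) := by
  have hAC : A ⊆ Set.Icc 0 u := hA.1.1
  have hJC : J ⊆ Set.Icc 0 u := hJ.1.1
  refine ⟨⟨setOplus_subset_Icc hu hAC hJC, ⟨0, 0, hA.1.zero_mem, 0, hJ.1.zero_mem,
    oplus_zero hu⟩, ?_, ?_⟩, fun x hx => ?_⟩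
  · rintro _ ⟨a, ha, j, hj, rfl⟩ y hy hya
    obtain ⟨a', ha'C, j', hj'C, ha'a, hj'j, rfl⟩ :=
      exists_oplus_eq_of_le_oplus hy (hAC ha).1 (hJC hj).1 hya
    exact ⟨a', hA.1.2.2.1 a ha a' ha'C ha'a, j', hJ.1.2.2.1 j hj j' hj'C hj'j, rfl⟩
  · rintro _ ⟨a, ha, j, hj, rfl⟩ _ ⟨a', ha', j', hj', rfl⟩
    rw [oplus_oplus_oplus_comm_of_inf_eq_zero hu (hAC ha).1 (hJC hj).1 (hAC ha').1 (hJC hj').1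
      (inf_comm a' j ▸ hAJ a' ha' j hj)]
    exact ⟨_, hA.1.2.2.2 a ha a' ha', _, hJ.1.2.2.2 j hj j' hj', rfl⟩
  refine Set.Subset.antisymm ?_ ?_
  · rintro _ ⟨_, ⟨a, ha, j, hj, rfl⟩, rfl⟩
    obtain ⟨a₁, ha₁, hxa⟩ := hA.exists_oplus_left_eq hx ha
    obtain ⟨j₁, hj₁, hxj⟩ := hJ.exists_oplus_left_eq hx hj
    refine ⟨oplus u a₁ j₁, ⟨a₁, ha₁, j₁, hj₁, rfl⟩, ?_⟩
    dsimp only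
    rw [oplus_assoc_of_nonneg (hAC ha₁).1 hx.1, hxj, ← oplus_assoc_of_nonneg (hAC ha₁).1
      (hJC hj).1, hxa, oplus_assoc_of_nonneg hx.1 (hJC hj).1]
  · rintro _ ⟨_, ⟨a, ha, j, hj, rfl⟩, rfl⟩
    obtain ⟨a₁, ha₁, hxa⟩ := hA.exists_oplus_right_eq hx ha
    obtain ⟨j₁, hj₁, hxj⟩ := hJ.exists_oplus_right_eq hx hj
    refine ⟨oplus u a₁ j₁, ⟨a₁, ha₁, j₁, hj₁, rfl⟩, ?_⟩
    dsimp only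
    rw [← oplus_assoc_of_nonneg hx.1 (hJC hj₁).1, hxa, oplus_assoc_of_nonneg (hAC ha).1
      (hJC hj₁).1, hxj, ← oplus_assoc_of_nonneg (hAC ha).1 hx.1]

end Ideals

section Summands

variable {u : G} {A : Set G}

theorem setOplus_polarIn_eq_of_isSummandIdealIn (hu : 0 ≤ u)
    (hA : IsSummandIdealIn u (Set.Icc 0 u) A) :
    setOplus u A (polarIn (Set.Icc 0 u) A) = Set.Icc 0 u := by
  obtain ⟨hAn, J, hJn, hAJ, hgen⟩ := hA
  have hAC : A ⊆ Set.Icc 0 u := hAn.1.1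
  have hJC : J ⊆ Set.Icc 0 u := hJn.1.1
  have hdisj : ∀ a ∈ A, ∀ j ∈ J, a ⊓ j = 0 := fun a ha j hj =>
    hAn.1.inf_eq_zero_of_inter_eq hJn.1 hAJ ha hj
  have hJP : J ⊆ polarIn (Set.Icc 0 u) A := fun j hj =>
    ⟨hJC hj, fun a ha => inf_comm a j ▸ hdisj a ha j hj⟩
  have hunion : A ∪ J ⊆ setOplus u A J := Set.union_subset
    (fun a ha => ⟨a, ha, 0, hJn.1.zero_mem, oplus_zero (hAC ha).2⟩)
    (fun j hj => ⟨0, hAn.1.zero_mem, j, hj, zero_oplus (hJC hj).2⟩)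
  refine (setOplus_subset_Icc hu hAC fun p hp => hp.1).antisymm ?_
  calc Set.Icc 0 u = normalGenIn u (Set.Icc 0 u) (A ∪ J) := hgen.symm
    _ ⊆ setOplus u A J := normalGenIn_subset (isNormalIdealIn_setOplus hu hAn hJn hdisj) hunion
    _ ⊆ setOplus u A (polarIn (Set.Icc 0 u) A) := Set.image2_subset_left hJP

theorem polarIn_eq_dsetIn {a₀ b₀ : G} (ha₀ : a₀ ∈ A) (hb₀ : b₀ ∈ polarIn (Set.Icc 0 u) A)
    (hsum : a₀ + b₀ = u) : polarIn (Set.Icc 0 u) A = dsetIn (Set.Icc 0 u) b₀ := by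
  ext j
  refine ⟨fun hj => ⟨hj.1, ?_⟩, fun ⟨hjC, hjb⟩ => ⟨hjC, fun a ha => ?_⟩⟩
  · calc j = j ⊓ (a₀ + b₀) := by rw [hsum, inf_eq_left.mpr hj.1.2]
      _ ≤ j ⊓ a₀ + j ⊓ b₀ := inf_add_le_inf_add_inf hj.1.1 (hb₀.2 a₀ ha₀ ▸ inf_le_right) hb₀.1.1
      _ = j ⊓ b₀ := by rw [hj.2 a₀ ha₀, zero_add]
      _ ≤ b₀ := inf_le_right
  · exact le_antisymm (hb₀.2 a ha ▸ inf_le_inf_right a hjb)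
      (le_inf hjC.1 (hb₀.2 a ha ▸ inf_le_right))

theorem isSummandIdealIn_of_setOplus_polarIn_eq (hu : 0 ≤ u)
    (hA : IsNormalIdealIn u (Set.Icc 0 u) A)
    (h : setOplus u A (polarIn (Set.Icc 0 u) A) = Set.Icc 0 u) :
    IsSummandIdealIn u (Set.Icc 0 u) A := by
  have hP := isIdealIn_polarIn hu hA.1.1
  obtain ⟨a₀, ha₀, b₀, hb₀, hab⟩ : u ∈ setOplus u A (polarIn (Set.Icc 0 u) A) :=
    by rw [h]; exact ⟨hu, le_rfl⟩
  have hdisj : a₀ ⊓ b₀ = 0 := inf_comm b₀ a₀ ▸ hb₀.2 a₀ ha₀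
  have hsum : a₀ + b₀ = u := by
    refine le_antisymm ?_ (hab ▸ inf_le_left)
    rw [add_eq_sup_of_inf_eq_zero hdisj]
    exact sup_le (hA.1.1 ha₀).2 hb₀.1.2
  have hPn : IsNormalIdealIn u (Set.Icc 0 u) (polarIn (Set.Icc 0 u) A) :=
    isNormalIdealIn_of_eq_dsetIn hP (polarIn_eq_dsetIn ha₀ hb₀ hsum) fun x hx => by
      rw [← hsum, add_inf_add_eq_add_inf_add hdisj hx.1, add_comm_of_inf_eq_zero hdisj]
  exact ⟨hA, _, hPn, inter_polarIn_eq_zero hu hA.1,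
    normalGenIn_eq_Icc_of_setOplus_eq hu (Set.union_subset hA.1.1 hP.1) h⟩

end Summands

theorem stmt3_general (u : G) (A : Set G)
    (hA : IsNormalIdealIn u (Set.Icc (0 : G) u) A) :
    IsSummandIdealIn u (Set.Icc (0 : G) u) A ↔
      setOplus u A (polarIn (Set.Icc (0 : G) u) A) = Set.Icc (0 : G) u := by
  have hu : (0 : G) ≤ u := by
    obtain ⟨a, ha⟩ := hA.1.2.1
    exact (hA.1.1 ha).1.trans (hA.1.1 ha).2
  exact ⟨setOplus_polarIn_eq_of_isSummandIdealIn hu, isSummandIdealIn_of_setOplus_polarIn_eq hu hA⟩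

theorem stmt3 (u : G) (hu : IsStrongUnit u) (A : Set G)
    (hA : IsNormalIdealIn u (Set.Icc (0 : G) u) A) :
    IsSummandIdealIn u (Set.Icc (0 : G) u) A ↔
      setOplus u A (polarIn (Set.Icc (0 : G) u) A) = Set.Icc (0 : G) u :=
  stmt3_general u A hA
end

section
/- Every summand-ideal A of the pseudo MV-algebra M = Γ(G,u) satisfies A = A^⊥⊥; in particular, every summand-ideal of M is a polar ideal of M. -/
variable {G : Type*} [Lattice G] [AddGroup G]
  [CovariantClass G G (· + ·) (· ≤ ·)]
  [CovariantClass G G (Function.swap (· + ·)) (· ≤ ·)]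

/-! ### Auxiliary lemmas -/

lemma oplus_le_u' (u x y : G) : oplus u x y ≤ u := inf_le_right

lemma oplus_le_add' (u x y : G) : oplus u x y ≤ x + y := inf_le_left

lemma oplus_mono' (u : G) {x x' y y' : G} (h1 : x ≤ x') (h2 : y ≤ y') :
    oplus u x y ≤ oplus u x' y' := inf_le_inf (add_le_add h1 h2) le_rfl

lemma oplus_assoc' (u x y z : G) (hx : 0 ≤ x) (hz : 0 ≤ z) :
    oplus u (oplus u x y) z = oplus u x (oplus u y z) := by
  show ((x + y) ⊓ u + z) ⊓ u = (x + ((y + z) ⊓ u)) ⊓ u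
  rw [inf_add, add_inf, ← add_assoc, inf_assoc, inf_assoc,
    inf_eq_right.2 (le_add_of_nonneg_right hz : u ≤ u + z),
    inf_eq_right.2 (le_add_of_nonneg_left hx : u ≤ x + u)]

/-- Riesz-type inequality: for nonnegative `b, d, j`, `b ⊓ (d+j) ≤ (b⊓d) + (b⊓j)`. -/
lemma inf_add_le_add_inf' {b d j : G} (hb : 0 ≤ b) (hd : 0 ≤ d) (hj : 0 ≤ j) :
    b ⊓ (d + j) ≤ (b ⊓ d) + (b ⊓ j) := by
  rw [add_inf, inf_add, inf_add]
  refine le_inf (le_inf ?_ ?_) (le_inf ?_ ?_)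
  · exact le_trans inf_le_left (le_add_of_nonneg_left hb)
  · exact le_trans inf_le_left (le_add_of_nonneg_left hd)
  · exact le_trans inf_le_left (le_add_of_nonneg_right hj)
  · exact inf_le_right

theorem stmt5 (u : G) (hu : IsStrongUnit u) (A : Set G)
    (hA : IsSummandIdealIn u (Set.Icc (0 : G) u) A) :
    A = polarIn (Set.Icc (0 : G) u) (polarIn (Set.Icc (0 : G) u) A) ∧ IsPolarIdealIn (Set.Icc (0 : G) u) A := by
  obtain ⟨⟨⟨hAC, hAne, hAdc, hAop⟩, hAnorm⟩, J, ⟨⟨hJC, hJne, hJdc, hJop⟩, hJnorm⟩, hAJ, hgen⟩ := hA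
  set C := Set.Icc (0 : G) u with hCdef
  have hu0 : (0 : G) ≤ u := hu.1
  have h0C : (0 : G) ∈ C := ⟨le_refl 0, hu0⟩
  have h0A : (0 : G) ∈ A := by
    obtain ⟨x, hx⟩ := hAne; exact hAdc x hx 0 h0C (hAC hx).1
  have h0J : (0 : G) ∈ J := by
    obtain ⟨x, hx⟩ := hJne; exact hJdc x hx 0 h0C (hJC hx).1
  have hopC : ∀ x ∈ C, ∀ y ∈ C, oplus u x y ∈ C := fun x hx y hy =>
    ⟨le_inf (add_nonneg hx.1 hy.1) hu0, inf_le_right⟩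
  -- J is contained in the polar of A
  have hJpol : ∀ j ∈ J, ∀ a ∈ A, j ⊓ a = 0 := by
    intro j hj a ha
    have hmC : j ⊓ a ∈ C := ⟨le_inf (hJC hj).1 (hAC ha).1, le_trans inf_le_left (hJC hj).2⟩
    have hmem : j ⊓ a ∈ A ∩ J :=
      ⟨hAdc a ha _ hmC inf_le_right, hJdc j hj _ hmC inf_le_left⟩
    rw [hAJ] at hmem; exact hmem
  -- normality movers
  have hAmove : ∀ x ∈ C, ∀ a ∈ A, ∃ a' ∈ A, oplus u x a = oplus u a' x := by
    intro x hx a ha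
    have h : oplus u x a ∈ (fun i => oplus u i x) '' A := by
      rw [← hAnorm x hx]; exact ⟨a, ha, rfl⟩
    obtain ⟨a', ha', h'⟩ := h; exact ⟨a', ha', h'.symm⟩
  have hAmove' : ∀ x ∈ C, ∀ a ∈ A, ∃ a' ∈ A, oplus u a x = oplus u x a' := by
    intro x hx a ha
    have h : oplus u a x ∈ (fun i => oplus u x i) '' A := by
      rw [hAnorm x hx]; exact ⟨a, ha, rfl⟩
    obtain ⟨a', ha', h'⟩ := h; exact ⟨a', ha', h'.symm⟩
  have hJmove : ∀ x ∈ C, ∀ j ∈ J, ∃ j' ∈ J, oplus u x j = oplus u j' x := by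
    intro x hx j hj
    have h : oplus u x j ∈ (fun i => oplus u i x) '' J := by
      rw [← hJnorm x hx]; exact ⟨j, hj, rfl⟩
    obtain ⟨j', hj', h'⟩ := h; exact ⟨j', hj', h'.symm⟩
  have hJmove' : ∀ x ∈ C, ∀ j ∈ J, ∃ j' ∈ J, oplus u j x = oplus u x j' := by
    intro x hx j hj
    have h : oplus u j x ∈ (fun i => oplus u x i) '' J := by
      rw [hJnorm x hx]; exact ⟨j, hj, rfl⟩
    obtain ⟨j', hj', h'⟩ := h; exact ⟨j', hj', h'.symm⟩
  -- the ideal K = { x ∈ C | x ≤ a ⊕ j for some a ∈ A, j ∈ J }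
  set K : Set G := {x ∈ C | ∃ a ∈ A, ∃ j ∈ J, x ≤ oplus u a j} with hKdef
  have hKC : K ⊆ C := fun x hx => hx.1
  have hAK : A ⊆ K := fun a ha =>
    ⟨hAC ha, a, ha, 0, h0J, le_inf (le_of_eq (add_zero a).symm) (hAC ha).2⟩
  have hJK : J ⊆ K := fun j hj =>
    ⟨hJC hj, 0, h0A, j, hj, le_inf (le_of_eq (zero_add j).symm) (hJC hj).2⟩
  have hKdc : ∀ x ∈ K, ∀ y ∈ C, y ≤ x → y ∈ K := by
    rintro x ⟨hxC, a, ha, j, hj, hle⟩ y hyC hyx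
    exact ⟨hyC, a, ha, j, hj, le_trans hyx hle⟩
  have hKop : ∀ x ∈ K, ∀ y ∈ K, oplus u x y ∈ K := by
    rintro x ⟨hxC, a, ha, j, hj, hxle⟩ y ⟨hyC, a', ha', j', hj', hyle⟩
    obtain ⟨a'', ha'', hcomm⟩ := hAmove j (hJC hj) a' ha'
    have key : oplus u (oplus u a j) (oplus u a' j') = oplus u (oplus u a a'') (oplus u j j') := by
      calc oplus u (oplus u a j) (oplus u a' j')
          = oplus u a (oplus u j (oplus u a' j')) :=
            oplus_assoc' u a j _ (hAC ha).1 (hopC a' (hAC ha') j' (hJC hj')).1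
        _ = oplus u a (oplus u (oplus u j a') j') := by
            rw [oplus_assoc' u j a' j' (hJC hj).1 (hJC hj').1]
        _ = oplus u a (oplus u (oplus u a'' j) j') := by rw [hcomm]
        _ = oplus u a (oplus u a'' (oplus u j j')) := by
            rw [oplus_assoc' u a'' j j' (hAC ha'').1 (hJC hj').1]
        _ = oplus u (oplus u a a'') (oplus u j j') :=
            (oplus_assoc' u a a'' _ (hAC ha).1 (hopC j (hJC hj) j' (hJC hj')).1).symm
    exact ⟨hopC x hxC y hyC, oplus u a a'', hAop a ha a'' ha'', oplus u j j',
      hJop j hj j' hj', le_trans (oplus_mono' u hxle hyle) (le_of_eq key)⟩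
  have hKnorm : ∀ x ∈ C, (fun i => oplus u x i) '' K = (fun i => oplus u i x) '' K := by
    intro x hx
    apply Set.Subset.antisymm
    · rintro _ ⟨k, ⟨hkC, a, ha, j, hj, hkle⟩, rfl⟩
      obtain ⟨a₁, ha₁, h1⟩ := hAmove x hx a ha
      obtain ⟨j₁, hj₁, h2⟩ := hJmove x hx j hj
      have hwC : oplus u a₁ j₁ ∈ C := hopC a₁ (hAC ha₁) j₁ (hJC hj₁)
      have hbound : oplus u x k ≤ oplus u a₁ j₁ + x := by
        calc oplus u x k ≤ oplus u x (oplus u a j) := oplus_mono' u le_rfl hkle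
          _ = oplus u (oplus u x a) j := (oplus_assoc' u x a j hx.1 (hJC hj).1).symm
          _ = oplus u (oplus u a₁ x) j := by rw [h1]
          _ = oplus u a₁ (oplus u x j) := oplus_assoc' u a₁ x j (hAC ha₁).1 (hJC hj).1
          _ = oplus u a₁ (oplus u j₁ x) := by rw [h2]
          _ = oplus u (oplus u a₁ j₁) x := (oplus_assoc' u a₁ j₁ x (hAC ha₁).1 hx.1).symm
          _ ≤ oplus u a₁ j₁ + x := oplus_le_add' u _ x
      have hxs : x ≤ oplus u x k := le_inf (le_add_of_nonneg_right hkC.1) hx.2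
      have hk'w : (oplus u x k - x) ⊔ 0 ≤ oplus u a₁ j₁ :=
        sup_le (sub_le_iff_le_add.2 hbound) hwC.1
      refine ⟨(oplus u x k - x) ⊔ 0,
        ⟨⟨le_sup_right, le_trans hk'w hwC.2⟩, a₁, ha₁, j₁, hj₁, hk'w⟩, ?_⟩
      show ((oplus u x k - x) ⊔ 0 + x) ⊓ u = oplus u x k
      rw [sup_add, sub_add_cancel, zero_add, sup_eq_left.2 hxs,
        inf_eq_left.2 (oplus_le_u' u x k)]
    · rintro _ ⟨k, ⟨hkC, a, ha, j, hj, hkle⟩, rfl⟩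
      obtain ⟨j₂, hj₂, h1⟩ := hJmove' x hx j hj
      obtain ⟨a₂, ha₂, h2⟩ := hAmove' x hx a ha
      have hwC : oplus u a₂ j₂ ∈ C := hopC a₂ (hAC ha₂) j₂ (hJC hj₂)
      have hbound : oplus u k x ≤ x + oplus u a₂ j₂ := by
        calc oplus u k x ≤ oplus u (oplus u a j) x := oplus_mono' u hkle le_rfl
          _ = oplus u a (oplus u j x) := oplus_assoc' u a j x (hAC ha).1 hx.1
          _ = oplus u a (oplus u x j₂) := by rw [h1]
          _ = oplus u (oplus u a x) j₂ := (oplus_assoc' u a x j₂ (hAC ha).1 (hJC hj₂).1).symm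
          _ = oplus u (oplus u x a₂) j₂ := by rw [h2]
          _ = oplus u x (oplus u a₂ j₂) := oplus_assoc' u x a₂ j₂ hx.1 (hJC hj₂).1
          _ ≤ x + oplus u a₂ j₂ := oplus_le_add' u x _
      have hxs : x ≤ oplus u k x := le_inf (le_add_of_nonneg_left hkC.1) hx.2
      have hk'w : (-x + oplus u k x) ⊔ 0 ≤ oplus u a₂ j₂ :=
        sup_le (by rwa [neg_add_le_iff_le_add]) hwC.1
      refine ⟨(-x + oplus u k x) ⊔ 0,
        ⟨⟨le_sup_right, le_trans hk'w hwC.2⟩, a₂, ha₂, j₂, hj₂, hk'w⟩, ?_⟩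
      show (x + ((-x + oplus u k x) ⊔ 0)) ⊓ u = oplus u k x
      rw [add_sup, add_neg_cancel_left, add_zero, sup_eq_left.2 hxs,
        inf_eq_left.2 (oplus_le_u' u k x)]
  -- hence C ⊆ K
  have hCK : C ⊆ K := by
    rw [← hgen]
    exact Set.sInter_subset_of_mem
      ⟨⟨⟨hKC, ⟨0, hAK h0A⟩, hKdc, hKop⟩, hKnorm⟩, Set.union_subset hAK hJK⟩
  -- the double polar equality
  have E : polarIn C (polarIn C A) = A := by
    apply Set.Subset.antisymm
    · rintro b ⟨hbC, hbpol⟩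
      obtain ⟨-, a, ha, j, hj, hble⟩ := hCK hbC
      have hbj : b ⊓ j = 0 := hbpol j ⟨hJC hj, fun a' ha' => hJpol j hj a' ha'⟩
      have hbaj : b ≤ a + j := le_trans hble (oplus_le_add' u a j)
      have hda : (b - j) ⊔ 0 ≤ a := sup_le (sub_le_iff_le_add.2 hbaj) (hAC ha).1
      have hdA : (b - j) ⊔ 0 ∈ A :=
        hAdc a ha _ ⟨le_sup_right, le_trans hda (hAC ha).2⟩ hda
      have hbdj : b ≤ (b - j) ⊔ 0 + j := by
        rw [sup_add, sub_add_cancel, zero_add]; exact le_sup_left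
      have hkey : b ≤ (b - j) ⊔ 0 := by
        calc b = b ⊓ ((b - j) ⊔ 0 + j) := (inf_eq_left.2 hbdj).symm
          _ ≤ (b ⊓ ((b - j) ⊔ 0)) + (b ⊓ j) :=
              inf_add_le_add_inf' hbC.1 le_sup_right (hJC hj).1
          _ = b ⊓ ((b - j) ⊔ 0) := by rw [hbj, add_zero]
          _ ≤ (b - j) ⊔ 0 := inf_le_right
      exact hAdc _ hdA b hbC hkey
    · intro a ha
      exact ⟨hAC ha, fun x hx => by rw [inf_comm]; exact hx.2 a ha⟩
  exact ⟨E.symm, E⟩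
end
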